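/- Let Ω be the open unit disk in ℝ² ≅ ℂ. If γ ∈ L²(Ω) satisfies ∫_Ω γ(z) ⟨∇Re(z^i), ∇Re(z^j)⟩ dz = 0 and ∫_Ω γ(z) ⟨∇Re(z^i), ∇Im(z^j)⟩ dz = 0 for all integers i, j ≥ 1, then γ = 0 almost everywhere on Ω. In other words, γ ∈ L²(Ω) is uniquely determined by the coefficients of the linearized Dirichlet-to-Neumann map in the trigonometric basis. -/

import Mathlib

open MeasureTheory
open scoped RealInnerProductSpace

/-!
Since `∇Re(z^(m+1)) = conj((m+1) z^m)` and `∇Im(z^(n+1)) = i conj((n+1) z^n)`, the two families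
of data are, up to the factor `(m+1)(n+1)`, the real and imaginary parts of the moments
`∫_Ω γ z^m conj(z)^n`. By Stone–Weierstrass the monomials `z^m conj(z)^n` span a dense subspace of
`C(closedBall 0 1, ℂ)`, which is dense in `L²`; so `γ` is orthogonal to all of `L²` and vanishes.
-/

open ComplexConjugate

theorem HasDerivAt.hasGradientAt_re {f : ℂ → ℂ} {f' z : ℂ} (hf : HasDerivAt f f' z) :
    HasGradientAt (fun w => (f w).re) (conj f') z := by
  rw [hasGradientAt_iff_hasFDerivAt]
  refine (Complex.reCLM.hasFDerivAt.comp z (hf.hasFDerivAt.restrictScalars ℝ)).congr_fderiv ?_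
  ext v
  simp [Complex.inner]

theorem HasDerivAt.hasGradientAt_im {f : ℂ → ℂ} {f' z : ℂ} (hf : HasDerivAt f f' z) :
    HasGradientAt (fun w => (f w).im) (Complex.I * conj f') z := by
  simpa [Complex.I_mul_re] using (hf.const_mul (-Complex.I)).hasGradientAt_re

theorem inner_gradient_re_pow_re_pow (m n : ℕ) (z : ℂ) :
    ⟪gradient (fun w : ℂ => (w ^ (m + 1)).re) z, gradient (fun w : ℂ => (w ^ (n + 1)).re) z⟫ =
      ((m + 1) * (n + 1) : ℝ) * (z ^ m * conj z ^ n).re := by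
  rw [(hasDerivAt_pow (m + 1) z).hasGradientAt_re.gradient,
    (hasDerivAt_pow (n + 1) z).hasGradientAt_re.gradient, Complex.inner, ← Complex.re_ofReal_mul]
  congr 1
  simp only [map_mul, map_pow, map_natCast, Complex.conj_conj, add_tsub_cancel_right]
  push_cast
  ring

theorem inner_gradient_re_pow_im_pow (m n : ℕ) (z : ℂ) :
    ⟪gradient (fun w : ℂ => (w ^ (m + 1)).re) z, gradient (fun w : ℂ => (w ^ (n + 1)).im) z⟫ =
      -(((m + 1) * (n + 1) : ℝ) * (z ^ m * conj z ^ n).im) := by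
  rw [(hasDerivAt_pow (m + 1) z).hasGradientAt_re.gradient,
    (hasDerivAt_pow (n + 1) z).hasGradientAt_im.gradient, Complex.inner,
    ← Complex.im_ofReal_mul, ← Complex.I_mul_re]
  congr 1
  simp only [map_mul, map_pow, map_natCast, Complex.conj_conj, add_tsub_cancel_right]
  push_cast
  ring

theorem integral_eq_zero_of_integral_re_of_integral_im {α : Type*} [MeasurableSpace α]
    {μ : Measure α} {f : α → ℂ} (hre : ∫ x, (f x).re ∂μ = 0) (him : ∫ x, (f x).im ∂μ = 0) :
    ∫ x, f x ∂μ = 0 := by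
  by_cases hf : Integrable f μ
  · apply Complex.ext
    · exact (integral_re hf).symm.trans hre
    · exact (integral_im hf).symm.trans him
  · exact integral_undef hf

theorem MeasureTheory.Lp.eq_zero_of_inner_toLp_eq_zero {X : Type*} [TopologicalSpace X]
    [CompactSpace X] [NormalSpace X] [MeasurableSpace X] [BorelSpace X]
    [SecondCountableTopologyEither X ℂ] {μ : Measure X} [IsFiniteMeasure μ] [μ.WeaklyRegular]
    {s : Set C(X, ℂ)} (hs : Dense (Submodule.span ℂ s : Set C(X, ℂ))) (f : Lp ℂ 2 μ)
    (h : ∀ a ∈ s, inner ℂ (ContinuousMap.toLp 2 μ ℂ a) f = 0) : f = 0 := by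
  let Φ := (innerSL ℂ f).comp (ContinuousMap.toLp 2 μ ℂ)
  have hspan : Submodule.span ℂ s ≤ Φ.ker :=
    Submodule.span_le.2 fun a ha => inner_eq_zero_symm.1 (h a ha)
  have hker : ∀ a, Φ a = 0 := fun a =>
    Φ.isClosed_ker.closure_subset_iff.2 hspan (hs a)
  exact (ContinuousMap.toLp_denseRange ℂ μ ℂ (by norm_num)).eq_zero_of_inner_left ℂ hker

theorem dense_span_monomials (K : Set ℂ) [CompactSpace K] :
    Dense (Submodule.span ℂ (Set.range fun p : ℕ × ℕ =>
      (ContinuousMap.restrict K (.id ℂ)) ^ p.1 * star (ContinuousMap.restrict K (.id ℂ)) ^ p.2) :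
        Set C(K, ℂ)) := by
  set ι := ContinuousMap.restrict K (.id ℂ)
  have hadjoin : (StarAlgebra.adjoin ℂ {ι} : Set C(K, ℂ)) ⊆
      Submodule.span ℂ (Set.range fun p : ℕ × ℕ => ι ^ p.1 * star ι ^ p.2) := by
    intro a ha
    have ha' : a ∈ Subalgebra.toSubmodule (Algebra.adjoin ℂ ({ι} ∪ star {ι})) := ha
    rw [Algebra.adjoin_eq_span, Set.star_singleton, Set.singleton_union] at ha'
    refine Submodule.span_mono ?_ ha'
    intro b hb
    obtain ⟨m, n, rfl⟩ := (Submonoid.mem_closure_pair _ _ _).1 hb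
    exact ⟨(m, n), rfl⟩
  intro f
  have hf : f ∈ closure (StarAlgebra.adjoin ℂ {ι} : Set C(K, ℂ)) := by
    rw [← StarSubalgebra.topologicalClosure_coe, ← StarAlgebra.elemental,
      ContinuousMap.elemental_id_eq_top]
    trivial
  exact closure_mono hadjoin hf

theorem ae_eq_zero_of_integral_mul_monomial_eq_zero {μ : Measure ℂ} [IsFiniteMeasure μ]
    {K : Set ℂ} (hK : IsCompact K) (hμK : ∀ᵐ z ∂μ, z ∈ K) {g : ℂ → ℂ} (hg : MemLp g 2 μ)
    (h : ∀ m n : ℕ, ∫ z, g z * (z ^ m * conj z ^ n) ∂μ = 0) : g =ᵐ[μ] 0 := by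
  have : CompactSpace K := isCompact_iff_compactSpace.mp hK
  have hval : MeasurableEmbedding (Subtype.val : K → ℂ) := .subtype_coe hK.measurableSet
  -- pass to the compact space `K`, where `C(K, ℂ)` is dense in `L²`
  set ν := μ.comap (Subtype.val : K → ℂ)
  have hμ : ν.map Subtype.val = μ := by
    rw [hval.map_comap, Subtype.range_coe, Measure.restrict_eq_self_of_ae_mem hμK]
  rw [← hμ] at hg h ⊢
  rw [hval.memLp_map_measure_iff] at hg
  simp_rw [hval.integral_map] at h
  have hzero := Lp.eq_zero_of_inner_toLp_eq_zero (dense_span_monomials K) (hg.toLp _) ?_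
  · rw [Filter.EventuallyEq, hval.ae_map_iff]
    filter_upwards [hg.coeFn_toLp, Lp.coeFn_zero ℂ 2 ν] with z hgz h0
    rw [hzero, h0] at hgz
    exact hgz.symm
  · rintro _ ⟨⟨m, n⟩, rfl⟩
    rw [L2.inner_def, ← h n m]
    refine integral_congr_ae ?_
    filter_upwards [ContinuousMap.coeFn_toLp (E := ℂ) (p := 2) (𝕜 := ℂ) ν _,
      hg.coeFn_toLp] with z ha hgz
    rw [ha, hgz]
    simp [mul_comm]

/-- uniqueness for the linearized EIT problem. If `γ ∈ L²` of the unit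
disk has all entries `∫_Ω γ ⟨∇Re(z^i), ∇Re(z^j)⟩` and `∫_Ω γ ⟨∇Re(z^i), ∇Im(z^j)⟩`
(`i, j ≥ 1`) of the linearized Dirichlet-to-Neumann map equal to zero, then `γ = 0`
almost everywhere on the disk. -/
theorem linearized_EIT_uniqueness (γ : ℂ → ℝ)
    (hγ : MemLp γ 2 (volume.restrict (Metric.ball (0:ℂ) 1)))
    (hcc : ∀ i j : ℕ, 1 ≤ i → 1 ≤ j →
      (∫ z in Metric.ball (0:ℂ) 1,
        γ z * ⟪gradient (fun w : ℂ => (w ^ i).re) z,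
               gradient (fun w : ℂ => (w ^ j).re) z⟫) = 0)
    (hcs : ∀ i j : ℕ, 1 ≤ i → 1 ≤ j →
      (∫ z in Metric.ball (0:ℂ) 1,
        γ z * ⟪gradient (fun w : ℂ => (w ^ i).re) z,
               gradient (fun w : ℂ => (w ^ j).im) z⟫) = 0) :
    ∀ᵐ z ∂(volume.restrict (Metric.ball (0:ℂ) 1)), γ z = 0 := by
  have : IsFiniteMeasure (volume.restrict (Metric.ball (0:ℂ) 1)) :=
    isFiniteMeasure_restrict.2 measure_ball_lt_top.ne
  have hmoment (m n : ℕ) :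
      ∫ z in Metric.ball (0:ℂ) 1, (γ z : ℂ) * (z ^ m * conj z ^ n) = 0 := by
    have hpos : ((m + 1) * (n + 1) : ℝ) ≠ 0 := by positivity
    have hre := hcc (m + 1) (n + 1) (by omega) (by omega)
    have him := hcs (m + 1) (n + 1) (by omega) (by omega)
    simp_rw [inner_gradient_re_pow_re_pow, mul_left_comm (γ _), integral_const_mul] at hre
    simp_rw [inner_gradient_re_pow_im_pow, mul_neg, mul_left_comm (γ _), integral_neg,
      integral_const_mul, neg_eq_zero] at him
    refine integral_eq_zero_of_integral_re_of_integral_im ?_ ?_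
    · simpa [hpos] using hre
    · simpa [hpos] using him
  have hzero := ae_eq_zero_of_integral_mul_monomial_eq_zero (isCompact_closedBall 0 1)
    (ae_restrict_of_forall_mem measurableSet_ball fun _ hz => Metric.ball_subset_closedBall hz)
    hγ.ofReal hmoment
  filter_upwards [hzero] with z hz
  exact Complex.ofReal_eq_zero.1 hz
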